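/- arXiv:2507.09125 — 2 statements merged into one kernel-verified Lean document; each statement's English description precedes it below -/
import Mathlib

section
/- Let ρ > 1 be a real number, let N ∈ ℕ, and let a : ℤ → ℂ satisfy a(n) = 0 for all n < −N. Let f : ℂ → ℂ be such that for every X ∈ ℂ with 0 < |X| < ρ the series ∑_{n ∈ ℤ} a(n)·Xⁿ converges (HasSum) to f(X). Define f₊(X) := ∑_{n ∈ ℕ} a(n)·Xⁿ. Then for every X with 0 < |X| < ρ: (i) for every r with 1 < r < ρ/|X| one has f₊(X) = (2πi)⁻¹ · ∮_{|z|=r} f(X·z)/(z−1) dz; and (ii) f₊(X) = f(X) + (2πi)⁻¹ · ∮_{|z|=1} (f(X·z) − f(X))/(z−1) dz. -/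
/-!
Because `a` vanishes below `-N`, on the punctured disc `f = f₊ + P` with `f₊` a power series of
radius at least `ρ` and `P(w) = ∑_{k<N} a(-k-1) w^(-k-1)`. On `|z| = r > 1`, Cauchy's
formula gives `∮ f₊(Xz)/(z-1) dz = 2πi f₊(X)`, while each `z^n/(z-1)` with `n < 0` integrates
to zero: its residues at `0` and `1` cancel. For (ii), the singularity of `(f(Xz) - f(X))/(z-1)`
at `z = 1` is removable, so the contour `|z| = 1` can be pushed out to `|z| = r`, where (i) applies.
-/

open Complex Metric Set Filter

theorem HasSum.eq_tsum_nat_add_sum_neg {E : Type*} [NormedAddCommGroup E] [CompleteSpace E]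
    {g : ℤ → E} {s : E} {N : ℕ} (hg : ∀ n < -(N : ℤ), g n = 0) (h : HasSum g s) :
    s = ∑' n : ℕ, g n + ∑ k ∈ Finset.range N, g (-(k + 1)) :=
  h.unique <| .of_nat_of_neg_add_one (h.summable.comp_injective Nat.cast_injective).hasSum <|
    hasSum_sum_of_ne_finset_zero fun k hk => hg _ (by simp at hk; omega)

theorem differentiableOn_tsum_mul_pow {c : ℕ → ℂ} {R : ℝ}
    (hc : ∀ t : ℝ, 0 < t → t < R → Summable fun n => c n * (t : ℂ) ^ n) :
    DifferentiableOn ℂ (fun w => ∑' n, c n * w ^ n) (ball 0 R) := by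
  set p := FormalMultilinearSeries.ofScalars ℂ c
  have hradius : ∀ w ∈ ball (0 : ℂ) R, ‖w‖ₑ < p.radius := by
    intro w hw
    obtain ⟨t, hwt, htR⟩ := exists_between (mem_ball_zero_iff.mp hw)
    have ht0 : 0 < t := (norm_nonneg w).trans_lt hwt
    have hle : (t.toNNReal : ENNReal) ≤ p.radius := by
      refine p.le_radius_of_tendsto (l := 0) ?_
      simpa [p, norm_mul, ht0.le, abs_of_pos ht0] using (hc t ht0 htR).tendsto_atTop_zero.norm
    refine lt_of_lt_of_le ?_ hle
    rw [← ofReal_norm, ENNReal.ofReal]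
    exact ENNReal.coe_lt_coe.2 (Real.toNNReal_lt_toNNReal_iff ht0 |>.2 hwt)
  have hsum : p.sum = fun w => ∑' n, c n * w ^ n :=
    funext fun w => (FormalMultilinearSeries.ofScalars_sum_eq c w).trans (by simp)
  intro w hw
  have hp := (p.hasFPowerSeriesOnBall (bot_le.trans_lt (hradius w hw))).differentiableOn
  rw [← hsum]
  exact (hp.differentiableAt (isOpen_eball.mem_nhds (by simpa using hradius w hw)))
    |>.differentiableWithinAt

theorem circleIntegrable_div_sub {g : ℂ → ℂ} {c w : ℂ} {r : ℝ} (hr : 0 ≤ r)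
    (hg : ContinuousOn g (sphere c r)) (hw : w ∉ sphere c r) :
    CircleIntegrable (fun z => g z / (z - w)) c r :=
  ContinuousOn.circleIntegrable hr <|
    hg.div (by fun_prop) fun z hz => sub_ne_zero.2 (by rintro rfl; exact hw hz)

theorem circleIntegral_zpow_div_sub_of_neg {w : ℂ} (hw0 : w ≠ 0) {r : ℝ} (hwr : ‖w‖ < r)
    {n : ℤ} (hn : n < 0) : ∮ z in C(0, r), z ^ n / (z - w) = 0 := by
  have hr : 0 < r := (norm_nonneg w).trans_lt hwr
  have hsphere : ∀ z ∈ sphere (0 : ℂ) r, z ≠ 0 := fun z hz =>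
    ne_of_mem_sphere hz hr.ne'
  have hzpow_cont : ∀ m : ℤ, ContinuousOn (fun z : ℂ => z ^ m) (sphere 0 r) := fun m =>
    (continuousOn_zpow₀ m).mono hsphere
  have hw : w ∉ sphere 0 r := fun h => hwr.ne (mem_sphere_zero_iff_norm.1 h)
  have hstep : ∀ m : ℤ, ∮ z in C(0, r), z ^ (m - 1) / (z - w) =
      w⁻¹ * ((∮ z in C(0, r), z ^ m / (z - w)) - ∮ z in C(0, r), z ^ (m - 1)) := by
    intro m
    rw [← circleIntegral.integral_sub (circleIntegrable_div_sub hr.le (hzpow_cont m) hw)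
      ((hzpow_cont _).circleIntegrable hr.le), ← circleIntegral.integral_const_mul]
    refine circleIntegral.integral_congr hr.le fun z hz => ?_
    have hz0 := hsphere z hz
    have hzw : z - w ≠ 0 := sub_ne_zero.2 fun h => hw (h ▸ hz)
    rw [zpow_sub_one₀ hz0]
    field_simp
    ring
  obtain hn' : n ≤ -1 := Int.le_sub_one_of_lt hn
  clear hn
  induction n, hn' using Int.leInductionDown with
  | base =>
    have h0 := circleIntegral.integral_sub_inv_of_mem_ball (mem_ball_zero_iff.2 hwr)
    have h1 : ∮ z in C(0, r), z⁻¹ = 2 * Real.pi * I := by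
      simpa using circleIntegral.integral_sub_center_inv 0 hr.ne'
    simpa [h0, h1] using hstep 0
  | pred m hm ih =>
    have hzpow : ∮ z in C(0, r), z ^ (m - 1) = 0 := by
      simpa using circleIntegral.integral_sub_zpow_of_ne (n := m - 1) (by omega) 0 0 r
    rw [hstep, ih, hzpow, sub_zero, mul_zero]

theorem circleIntegral_sum_mul_zpow_div_sub_of_neg {ι : Type*} {w : ℂ} (hw0 : w ≠ 0)
    {r : ℝ} (hwr : ‖w‖ < r) (s : Finset ι) (b : ι → ℂ) (e : ι → ℤ)
    (he : ∀ i ∈ s, e i < 0) :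
    ∮ z in C(0, r), (∑ i ∈ s, b i * z ^ e i) / (z - w) = 0 := by
  have hr : 0 < r := (norm_nonneg w).trans_lt hwr
  have hint : ∀ i, CircleIntegrable (fun z => b i * z ^ e i / (z - w)) 0 r := fun i =>
    circleIntegrable_div_sub hr.le (((continuousOn_zpow₀ _).mono
      fun z hz => ne_of_mem_sphere hz hr.ne').const_smul (b i))
      fun h => hwr.ne (mem_sphere_zero_iff_norm.1 h)
  simp only [Finset.sum_div]
  rw [circleIntegral.integral_fun_sum fun i _ => hint i]
  refine Finset.sum_eq_zero fun i hi => ?_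
  simp only [mul_div_assoc, circleIntegral.integral_const_mul,
    circleIntegral_zpow_div_sub_of_neg hw0 hwr (he i hi), mul_zero]

theorem circleIntegral_slope_eq_of_differentiableAt_annulus {c w : ℂ} {r R : ℝ} (h0 : 0 < r)
    (hle : r ≤ R) {g : ℂ → ℂ} (hw : DifferentiableAt ℂ g w)
    (hg : ∀ z ∈ closedBall c R \ ball c r, DifferentiableAt ℂ g z) :
    ∮ z in C(c, R), (g z - g w) / (z - w) = ∮ z in C(c, r), (g z - g w) / (z - w) := by
  have hslope : ∀ s : Set ℂ,
      dslope g w =ᶠ[codiscreteWithin s] fun z => (g z - g w) / (z - w) :=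
    fun s => Filter.mem_of_superset (compl_singleton_mem_codiscreteWithin w) fun z hz => by
      simp [dslope_of_ne _ hz, slope_def_field]
  rw [← circleIntegral.circleIntegral_congr_codiscreteWithin (hslope _) (h0.trans_le hle).ne',
    ← circleIntegral.circleIntegral_congr_codiscreteWithin (hslope _) h0.ne']
  refine circleIntegral_eq_of_differentiable_on_annulus_off_countable h0 hle
    (countable_singleton w) (fun z hz => ?_) fun z hz => ?_
  · rcases eq_or_ne z w with rfl | hzw
    · exact (continuousAt_dslope_same.2 hw).continuousWithinAt
    · exact ((continuousAt_dslope_of_ne hzw).2 (hg z hz).continuousAt).continuousWithinAt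
  · exact (differentiableAt_dslope_of_ne hz.2).2
      (hg z ⟨ball_subset_closedBall hz.1.1, fun h => hz.1.2 (ball_subset_closedBall h)⟩)

noncomputable def regularPart (a : ℤ → ℂ) (w : ℂ) : ℂ := ∑' n : ℕ, a n * w ^ n

noncomputable def principalPart (a : ℤ → ℂ) (N : ℕ) (w : ℂ) : ℂ :=
  ∑ k ∈ Finset.range N, a (-(k + 1)) * w ^ (-(k + 1 : ℤ))

section

variable {ρ : ℝ} {N : ℕ} {a : ℤ → ℂ} {f : ℂ → ℂ}

theorem eq_regularPart_add_principalPart (ha : ∀ n : ℤ, n < -(N : ℤ) → a n = 0)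
    (hf : ∀ X : ℂ, 0 < ‖X‖ → ‖X‖ < ρ → HasSum (fun n : ℤ => a n * X ^ n) (f X))
    {w : ℂ} (hw0 : 0 < ‖w‖) (hwρ : ‖w‖ < ρ) :
    f w = regularPart a w + principalPart a N w := by
  simpa [regularPart, principalPart] using
    (hf w hw0 hwρ).eq_tsum_nat_add_sum_neg fun n hn => by simp [ha n hn]

theorem differentiableOn_regularPart
    (hf : ∀ X : ℂ, 0 < ‖X‖ → ‖X‖ < ρ → HasSum (fun n : ℤ => a n * X ^ n) (f X)) :
    DifferentiableOn ℂ (regularPart a) (ball 0 ρ) :=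
  differentiableOn_tsum_mul_pow fun t ht0 htρ => by
    have ht : ‖(t : ℂ)‖ = t := by simp [ht0.le]
    refine ((hf t (by rwa [ht]) (by rwa [ht])).summable.comp_injective Nat.cast_injective).congr
      fun n => ?_
    simp

theorem differentiableOn_of_hasSum_laurent (ha : ∀ n : ℤ, n < -(N : ℤ) → a n = 0)
    (hf : ∀ X : ℂ, 0 < ‖X‖ → ‖X‖ < ρ → HasSum (fun n : ℤ => a n * X ^ n) (f X)) :
    DifferentiableOn ℂ f (ball 0 ρ \ {0}) := by
  have hprincipal : DifferentiableOn ℂ (principalPart a N) (ball 0 ρ \ {0}) :=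
    DifferentiableOn.fun_sum fun k _ =>
      ((differentiableOn_zpow _ _ (.inl fun h => h.2 rfl)).const_mul _)
  refine ((differentiableOn_regularPart hf).mono sdiff_subset |>.add hprincipal).congr ?_
  rintro w ⟨hwρ, hw0⟩
  exact eq_regularPart_add_principalPart ha hf (norm_pos_iff.2 hw0) (mem_ball_zero_iff.1 hwρ)

theorem differentiableAt_comp_const_mul_of_hasSum_laurent
    (ha : ∀ n : ℤ, n < -(N : ℤ) → a n = 0)
    (hf : ∀ X : ℂ, 0 < ‖X‖ → ‖X‖ < ρ → HasSum (fun n : ℤ => a n * X ^ n) (f X))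
    {X z : ℂ} (hXz0 : X * z ≠ 0) (hXzρ : ‖X * z‖ < ρ) :
    DifferentiableAt ℂ (fun z => f (X * z)) z :=
  ((differentiableOn_of_hasSum_laurent ha hf).differentiableAt
    ((isOpen_ball.sdiff isClosed_singleton).mem_nhds ⟨mem_ball_zero_iff.2 hXzρ, hXz0⟩)).comp z
    (differentiableAt_id.const_mul X)

theorem circleIntegral_comp_const_mul_div_sub_one (ha : ∀ n : ℤ, n < -(N : ℤ) → a n = 0)
    (hf : ∀ X : ℂ, 0 < ‖X‖ → ‖X‖ < ρ → HasSum (fun n : ℤ => a n * X ^ n) (f X))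
    {X : ℂ} (hX0 : 0 < ‖X‖) {r : ℝ} (hr1 : 1 < r) (hrρ : ‖X‖ * r < ρ) :
    ∮ z in C(0, r), f (X * z) / (z - 1) = 2 * Real.pi * I * regularPart a X := by
  have hr0 : 0 < r := one_pos.trans hr1
  have hXz : ∀ z ∈ sphere (0 : ℂ) r, 0 < ‖X * z‖ ∧ ‖X * z‖ < ρ := fun z hz => by
    rw [norm_mul, mem_sphere_zero_iff_norm.1 hz]
    exact ⟨by positivity, hrρ⟩
  have hreg : DifferentiableOn ℂ (fun z => regularPart a (X * z)) (closedBall 0 r) :=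
    (differentiableOn_regularPart hf).comp (differentiableOn_id.const_mul X) fun z hz => by
      rw [mem_ball_zero_iff, norm_mul]
      exact (mul_le_mul_of_nonneg_left (mem_closedBall_zero_iff.1 hz) hX0.le).trans_lt hrρ
  have hcont : ContinuousOn (fun z => f (X * z)) (sphere 0 r) := fun z hz =>
    (differentiableAt_comp_const_mul_of_hasSum_laurent ha hf (norm_pos_iff.1 (hXz z hz).1)
      (hXz z hz).2).continuousAt.continuousWithinAt
  have h1 : (1 : ℂ) ∉ sphere 0 r := by simpa using hr1.ne
  have hcauchy : ∮ z in C(0, r), regularPart a (X * z) / (z - 1) =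
      2 * Real.pi * I * regularPart a X := by
    simpa [div_eq_inv_mul] using hreg.circleIntegral_sub_inv_smul (w := 1) (by simpa using hr1)
  rw [← sub_eq_zero, ← hcauchy, ← circleIntegral.integral_sub
    (circleIntegrable_div_sub hr0.le hcont h1)
    (circleIntegrable_div_sub hr0.le (hreg.continuousOn.mono sphere_subset_closedBall) h1)]
  calc _ = ∮ z in C(0, r), (∑ k ∈ Finset.range N,
          a (-(k + 1)) * X ^ (-(k + 1 : ℤ)) * z ^ (-(k + 1 : ℤ))) / (z - 1) :=
        circleIntegral.integral_congr hr0.le fun z hz => by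
          simp only [← sub_div, eq_regularPart_add_principalPart ha hf (hXz z hz).1 (hXz z hz).2,
            principalPart, add_sub_cancel_left, mul_zpow, mul_assoc]
    _ = 0 := circleIntegral_sum_mul_zpow_div_sub_of_neg one_ne_zero (by simpa using hr1) _ _ _
        fun k _ => by omega

theorem circleIntegral_comp_const_mul_slope_one (ha : ∀ n : ℤ, n < -(N : ℤ) → a n = 0)
    (hf : ∀ X : ℂ, 0 < ‖X‖ → ‖X‖ < ρ → HasSum (fun n : ℤ => a n * X ^ n) (f X))
    {X : ℂ} (hX0 : 0 < ‖X‖) (hXρ : ‖X‖ < ρ) :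
    ∮ z in C(0, 1), (f (X * z) - f X) / (z - 1) =
      2 * Real.pi * I * (regularPart a X - f X) := by
  obtain ⟨r, hr1, hrρ⟩ := exists_between ((one_lt_div hX0).2 hXρ)
  have hr0 : 0 < r := one_pos.trans hr1
  have hXr : ‖X‖ * r < ρ := (lt_div_iff₀' hX0).1 hrρ
  have hdiff : ∀ z : ℂ, z ≠ 0 → ‖z‖ ≤ r → DifferentiableAt ℂ (fun z => f (X * z)) z :=
    fun z hz0 hzr => differentiableAt_comp_const_mul_of_hasSum_laurent ha hf
      (mul_ne_zero (norm_pos_iff.1 hX0) hz0)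
      (by rw [norm_mul]; exact (mul_le_mul_of_nonneg_left hzr hX0.le).trans_lt hXr)
  have hannulus := circleIntegral_slope_eq_of_differentiableAt_annulus one_pos hr1.le
    (hdiff 1 one_ne_zero (by simpa using hr1.le)) fun z hz => hdiff z
      (fun h => hz.2 (by simp [h])) (mem_closedBall_zero_iff.1 hz.1)
  simp only [mul_one] at hannulus
  have h1 : (1 : ℂ) ∉ sphere 0 r := by simpa using hr1.ne
  rw [← hannulus]
  simp only [sub_div]
  rw [circleIntegral.integral_sub
    (circleIntegrable_div_sub hr0.le (fun z hz => (hdiff z (ne_of_mem_sphere hz hr0.ne')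
      (mem_sphere_zero_iff_norm.1 hz).le).continuousAt.continuousWithinAt) h1)
    (circleIntegrable_div_sub hr0.le continuousOn_const h1),
    circleIntegral_comp_const_mul_div_sub_one ha hf hX0 hr1 hXr]
  simp only [div_eq_mul_inv, circleIntegral.integral_const_mul,
    circleIntegral.integral_sub_inv_of_mem_ball (c := 0) (w := 1) (by simpa using hr1)]
  ring

end

theorem laurent_truncation_circle_general
    (ρ : ℝ) (N : ℕ) (a : ℤ → ℂ)
    (ha : ∀ n : ℤ, n < -(N : ℤ) → a n = 0)
    (f : ℂ → ℂ)
    (hf : ∀ X : ℂ, 0 < ‖X‖ → ‖X‖ < ρ → HasSum (fun n : ℤ => a n * X ^ n) (f X))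
    (X : ℂ) (hX0 : 0 < ‖X‖) (hXρ : ‖X‖ < ρ) :
    (∀ r : ℝ, 1 < r → r < ρ / ‖X‖ →
        (∑' n : ℕ, a (n : ℤ) * X ^ n)
          = (2 * (Real.pi : ℂ) * Complex.I)⁻¹ *
              ∮ z in C(0, r), f (X * z) / (z - 1)) ∧
    (∑' n : ℕ, a (n : ℤ) * X ^ n)
      = f X + (2 * (Real.pi : ℂ) * Complex.I)⁻¹ *
          ∮ z in C(0, 1), (f (X * z) - f X) / (z - 1) := by
  refine ⟨fun r hr1 hrρ => ?_, ?_⟩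
  · rw [circleIntegral_comp_const_mul_div_sub_one ha hf hX0 hr1 ((lt_div_iff₀' hX0).1 hrρ),
      inv_mul_cancel_left₀ two_pi_I_ne_zero]
    rfl
  · rw [circleIntegral_comp_const_mul_slope_one ha hf hX0 hXρ,
      inv_mul_cancel_left₀ two_pi_I_ne_zero, add_sub_cancel]
    rfl

/-- Truncation of a Laurent series to its nonnegative part via circle integrals:
for `0 < |X| < ρ`, (i) `f₊(X) = (2πi)⁻¹ ∮_{|z|=r} f(Xz)/(z−1) dz` for any
`1 < r < ρ/|X|`, and (ii) `f₊(X) = f(X) + (2πi)⁻¹ ∮_{|z|=1} (f(Xz)−f(X))/(z−1) dz`. -/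
theorem laurent_truncation_circle
    (ρ : ℝ) (hρ : 1 < ρ) (N : ℕ) (a : ℤ → ℂ)
    (ha : ∀ n : ℤ, n < -(N : ℤ) → a n = 0)
    (f : ℂ → ℂ)
    (hf : ∀ X : ℂ, 0 < ‖X‖ → ‖X‖ < ρ → HasSum (fun n : ℤ => a n * X ^ n) (f X))
    (X : ℂ) (hX0 : 0 < ‖X‖) (hXρ : ‖X‖ < ρ) :
    (∀ r : ℝ, 1 < r → r < ρ / ‖X‖ →
        (∑' n : ℕ, a (n : ℤ) * X ^ n)
          = (2 * (Real.pi : ℂ) * Complex.I)⁻¹ *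
              ∮ z in C(0, r), f (X * z) / (z - 1)) ∧
    (∑' n : ℕ, a (n : ℤ) * X ^ n)
      = f X + (2 * (Real.pi : ℂ) * Complex.I)⁻¹ *
          ∮ z in C(0, 1), (f (X * z) - f X) / (z - 1) :=
  laurent_truncation_circle_general ρ N a ha f hf X hX0 hXρ
end

section
/- Let p be an odd prime and let ψ : ℚ_p → ℂ be an additive character (AddChar) such that ψ(x) = 1 for all x ∈ ℤ_p and ψ is nontrivial on p⁻¹ℤ_p (i.e. ψ has conductor exponent 0). Let n ≥ 2 be an integer, set m := ⌊n/2⌋, and let χ : ℚ_p^× → ℂ^× be a group homomorphism with χ(u) = 1 for all u ∈ 1 + pⁿℤ_p. Then there exists c ∈ ℤ_p such that for all u ∈ pᵐℤ_p: χ(1 + u) = ψ( p^{−n} · c · (u − u²/2) ). Moreover c is uniquely determined modulo p^{n−m}ℤ_p: any two such c, c' satisfy c − c' ∈ p^{n−m}ℤ_p. -/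
/-!
On `Uₘ = 1 + pᵐℤ_p` with `n ≤ 3m`, the truncated logarithm `L(u) = u - u²/2` is additive
modulo `pⁿ`, and for odd `p` it is also injective modulo `pⁿ`. So `χ(1 + u)` only depends on
`L(u)` modulo `pⁿ`. Take `v₀ = 1 + pᵐ + p²ᵐ/2`, so that `L(v₀ - 1) ≡ pᵐ (mod pⁿ)`. Then every
`v ∈ Uₘ` is congruent modulo `pⁿ` to `v₀ᵏ` with `k ≡ L(v - 1)/pᵐ (mod p^{n-m})`, so `χ` on `Uₘ`
is determined by `χ(v₀)`. This is a `p^{n-m}`-th root of unity, hence a power `ζᵃ` of the primitive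
root `ζ = ψ(p^{m-n})`, and `c = a` works. Evaluating both sides at `v₀` shows that `c` is unique
modulo `p^{n-m}`.
-/

noncomputable def truncLog {K : Type*} [Field K] (u : K) : K := u - u ^ 2 / 2

lemma MonoidHom.map_eq_of_norm_sub_le {K : Type*} [NormedField K] {G : Type*} [Group G]
    (χ : Kˣ →* G) {ε : ℝ} (hχ : ∀ u : Kˣ, ‖(u : K) - 1‖ ≤ ε → χ u = 1) {v w : Kˣ}
    (h : ‖(v : K) - w‖ ≤ ε * ‖(w : K)‖) :
    χ v = χ w := by
  have hquot : χ (w⁻¹ * v) = 1 := by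
    apply hχ
    have hquot : (w : K)⁻¹ * v - 1 = (v - w) / w := by field_simp
    rwa [Units.val_mul, Units.val_inv_eq_inv_val, hquot, norm_div,
      div_le_iff₀ (norm_pos_iff.mpr w.ne_zero)]
  rw [← mul_inv_cancel_left w v, map_mul, hquot, mul_one]

section TruncatedLogarithm

variable {K : Type*} [NormedField K] [IsUltrametricDist K]

lemma IsUltrametricDist.norm_add_le_of_le {S : Type*} [SeminormedAddGroup S]
    [IsUltrametricDist S] {a b : S} {r : ℝ} (ha : ‖a‖ ≤ r) (hb : ‖b‖ ≤ r) : ‖a + b‖ ≤ r :=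
  (IsUltrametricDist.norm_add_le_max a b).trans (max_le ha hb)

lemma norm_one_add_eq_one {x : K} (hx : ‖x‖ < 1) : ‖1 + x‖ = 1 := by
  rw [IsUltrametricDist.norm_add_eq_max_of_norm_ne_norm (by simpa using hx.ne'), norm_one,
    max_eq_left hx.le]

lemma norm_truncLog_sub_truncLog (h2 : ‖(2 : K)‖ = 1) {u v : K} (hu : ‖u‖ < 1)
    (hv : ‖v‖ < 1) : ‖truncLog u - truncLog v‖ = ‖u - v‖ := by
  have hsmall : ‖-((u + v) / 2)‖ < 1 := by
    rw [norm_neg, norm_div, h2, div_one]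
    exact (IsUltrametricDist.norm_add_le_max u v).trans_lt (max_lt hu hv)
  have hfactor : truncLog u - truncLog v = (u - v) * (1 + -((u + v) / 2)) := by
    unfold truncLog; ring
  rw [hfactor, norm_mul, norm_one_add_eq_one hsmall, mul_one]

lemma norm_truncLog_le (h2 : ‖(2 : K)‖ = 1) {u : K} (hu : ‖u‖ < 1) : ‖truncLog u‖ ≤ ‖u‖ := by
  simpa [truncLog] using (norm_truncLog_sub_truncLog h2 hu (norm_zero.trans_lt one_pos)).le

lemma norm_truncLog_add_add_mul_sub_le (h2 : ‖(2 : K)‖ = 1) {r : ℝ} (hr : r ≤ 1) {u v : K}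
    (hu : ‖u‖ ≤ r) (hv : ‖v‖ ≤ r) :
    ‖truncLog (u + v + u * v) - (truncLog u + truncLog v)‖ ≤ r ^ 3 := by
  have hr0 : 0 ≤ r := (norm_nonneg u).trans hu
  have hcubic : ∀ a b c : K, ‖a‖ ≤ r → ‖b‖ ≤ r → ‖c‖ ≤ r → ‖a * b * c‖ ≤ r ^ 3 := by
    intro a b c ha hb hc
    rw [norm_mul, norm_mul, pow_three, ← mul_assoc]
    gcongr
  have hquartic : ‖u * u * v * (v / 2)‖ ≤ r ^ 3 := by
    rw [norm_mul _ (v / 2), norm_div, h2, div_one]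
    calc ‖u * u * v‖ * ‖v‖ ≤ r ^ 3 * 1 := by
          gcongr
          · exact hcubic u u v hu hu hv
          · exact hv.trans hr
      _ = r ^ 3 := mul_one _
  have hexpand : truncLog (u + v + u * v) - (truncLog u + truncLog v)
      = -(u * u * v) + -(u * v * v) + -(u * u * v * (v / 2)) := by
    have : (2 : K) ≠ 0 := norm_ne_zero_iff.mp (by rw [h2]; exact one_ne_zero)
    unfold truncLog; field_simp; ring
  rw [hexpand]
  refine IsUltrametricDist.norm_add_le_of_le (IsUltrametricDist.norm_add_le_of_le ?_ ?_) ?_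
  · simpa using hcubic u u v hu hu hv
  · simpa using hcubic u v v hu hv hv
  · simpa using hquartic

lemma norm_truncLog_one_add_pow_sub_le (h2 : ‖(2 : K)‖ = 1) {r : ℝ} (hr : r ≤ 1) {u : K}
    (hu : ‖u‖ ≤ r) (k : ℕ) :
    ‖(1 + u) ^ k - 1‖ ≤ r ∧ ‖truncLog ((1 + u) ^ k - 1) - k * truncLog u‖ ≤ r ^ 3 := by
  induction k with
  | zero =>
    have hr0 : 0 ≤ r := (norm_nonneg u).trans hu
    simpa [truncLog] using ⟨hr0, pow_nonneg hr0 3⟩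
  | succ k ih =>
    obtain ⟨hw, hLw⟩ := ih
    set w := (1 + u) ^ k - 1
    have hstep : (1 + u) ^ (k + 1) - 1 = w + u + w * u := by simp only [w]; ring
    have hwu : ‖w * u‖ ≤ r := by
      rw [norm_mul]
      exact (mul_le_of_le_one_left (norm_nonneg u) (hw.trans hr)).trans hu
    refine ⟨?_, ?_⟩
    · rw [hstep]
      exact IsUltrametricDist.norm_add_le_of_le (IsUltrametricDist.norm_add_le_of_le hw hu) hwu
    · have hsplit : truncLog (w + u + w * u) - ((k + 1 : ℕ) : K) * truncLog u
          = (truncLog (w + u + w * u) - (truncLog w + truncLog u))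
            + (truncLog w - k * truncLog u) := by
        push_cast; ring
      rw [hstep, hsplit]
      exact IsUltrametricDist.norm_add_le_of_le
        (norm_truncLog_add_add_mul_sub_le h2 hr hw hu) hLw

lemma exists_unit_norm_truncLog_sub_le (h2 : ‖(2 : K)‖ = 1) {q : K} (hq : ‖q‖ < 1) :
    ∃ v : Kˣ, ‖(v : K) - 1‖ ≤ ‖q‖ ∧ ‖truncLog ((v : K) - 1) - q‖ ≤ ‖q‖ ^ 3 := by
  have hu : ‖q + q ^ 2 / 2‖ ≤ ‖q‖ := by
    refine IsUltrametricDist.norm_add_le_of_le le_rfl ?_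
    rw [norm_div, h2, div_one, norm_pow]
    exact pow_le_of_le_one (norm_nonneg q) hq.le two_ne_zero
  have hv : (1 + (q + q ^ 2 / 2)) ≠ 0 := by
    intro h0
    simpa [h0] using norm_one_add_eq_one (hu.trans_lt hq)
  refine ⟨Units.mk0 _ hv, by simpa using hu, ?_⟩
  have hexpand :
      truncLog (1 + (q + q ^ 2 / 2) - 1) - q = -(q ^ 3 / 2) + -(q ^ 4 / 2 ^ 3) := by
    have : (2 : K) ≠ 0 := norm_ne_zero_iff.mp (by rw [h2]; exact one_ne_zero)
    unfold truncLog; field_simp; ring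
  simp only [Units.val_mk0, hexpand]
  refine IsUltrametricDist.norm_add_le_of_le ?_ ?_
  · rw [norm_neg, norm_div, h2, div_one, norm_pow]
  · rw [norm_neg, norm_div, norm_pow, norm_pow, h2, one_pow, div_one]
    exact pow_le_pow_of_le_one (norm_nonneg q) hq.le (by norm_num)

lemma map_eq_pow_of_norm_truncLog_sub_le (h2 : ‖(2 : K)‖ = 1) {G : Type*} [Group G]
    (χ : Kˣ →* G) {ε : ℝ} (hχ : ∀ u : Kˣ, ‖(u : K) - 1‖ ≤ ε → χ u = 1) {r : ℝ} (hr : r < 1)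
    (hrε : r ^ 3 ≤ ε) {v₀ : Kˣ} {q : K} (hv₀ : ‖(v₀ : K) - 1‖ ≤ r)
    (hq : ‖truncLog ((v₀ : K) - 1) - q‖ ≤ ε) {v : Kˣ} (hv : ‖(v : K) - 1‖ ≤ r) {k : ℕ}
    (hk : ‖truncLog ((v : K) - 1) - k * q‖ ≤ ε) : χ v = χ v₀ ^ k := by
  obtain ⟨hpow, hLpow⟩ := norm_truncLog_one_add_pow_sub_le h2 hr.le hv₀ k
  rw [add_sub_cancel] at hpow hLpow
  have hkq : ‖(k : K) * (truncLog ((v₀ : K) - 1) - q)‖ ≤ ε := by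
    rw [norm_mul]
    exact (mul_le_of_le_one_left (norm_nonneg _)
      (IsUltrametricDist.norm_natCast_le_one K k)).trans hq
  have hL : ‖truncLog ((v : K) - 1) - truncLog ((v₀ : K) ^ k - 1)‖ ≤ ε := by
    have hsplit : truncLog ((v : K) - 1) - truncLog ((v₀ : K) ^ k - 1)
        = (truncLog ((v : K) - 1) - k * q)
          + (-(truncLog ((v₀ : K) ^ k - 1) - k * truncLog ((v₀ : K) - 1))
            + -((k : K) * (truncLog ((v₀ : K) - 1) - q))) := by ring
    rw [hsplit]
    refine IsUltrametricDist.norm_add_le_of_le hk (IsUltrametricDist.norm_add_le_of_le ?_ ?_)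
    · rw [norm_neg]; exact hLpow.trans hrε
    · rwa [norm_neg]
  have hnorm : ‖((v₀ ^ k : Kˣ) : K)‖ = 1 := by
    rw [Units.val_pow_eq_pow_val, ← add_sub_cancel 1 ((v₀ : K) ^ k)]
    exact norm_one_add_eq_one (hpow.trans_lt hr)
  rw [← map_pow]
  refine χ.map_eq_of_norm_sub_le hχ ?_
  rw [hnorm, mul_one, Units.val_pow_eq_pow_val, ← sub_sub_sub_cancel_right _ _ 1,
    ← norm_truncLog_sub_truncLog h2 (hv.trans_lt hr) (hpow.trans_lt hr)]
  exact hL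

end TruncatedLogarithm

section AdditiveCharacter

variable {p : ℕ} [Fact p.Prime] {R : Type*} [CommMonoid R] {ψ : AddChar ℚ_[p] R}

lemma PadicInt.norm_sub_appr_le (t : ℤ_[p]) (s : ℕ) :
    ‖t - t.appr s‖ ≤ (p : ℝ) ^ (-(s : ℤ)) :=
  (PadicInt.norm_le_pow_iff_mem_span_pow _ s).mpr (PadicInt.appr_spec s t)

lemma Padic.exists_eq_p_pow_mul {m : ℕ} {x : ℚ_[p]} (hx : ‖x‖ ≤ (p : ℝ) ^ (-(m : ℤ))) :
    ∃ t : ℤ_[p], x = (p : ℚ_[p]) ^ m * t := by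
  have hp : (p : ℚ_[p]) ≠ 0 := by exact_mod_cast (Fact.out : p.Prime).ne_zero
  have ht : ‖x / (p : ℚ_[p]) ^ m‖ ≤ 1 := by
    rw [norm_div, Padic.norm_p_pow,
      div_le_one (zpow_pos (by exact_mod_cast (Fact.out : p.Prime).pos) _)]
    exact hx
  exact ⟨⟨_, ht⟩, (mul_div_cancel₀ x (pow_ne_zero m hp)).symm⟩

lemma AddChar.apply_eq_of_norm_sub_le_one (hψ : ∀ x : ℚ_[p], ‖x‖ ≤ 1 → ψ x = 1) {x y : ℚ_[p]}
    (h : ‖x - y‖ ≤ 1) : ψ x = ψ y := by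
  rw [← sub_add_cancel x y, AddChar.map_add_eq_mul, hψ _ h, one_mul]

lemma AddChar.apply_p_zpow_neg_mul (hψ : ∀ x : ℚ_[p], ‖x‖ ≤ 1 → ψ x = 1) (s : ℕ)
    (t : ℤ_[p]) :
    ψ ((p : ℚ_[p]) ^ (-(s : ℤ)) * t) = ψ ((p : ℚ_[p]) ^ (-(s : ℤ))) ^ t.appr s := by
  rw [← AddChar.map_nsmul_eq_pow, nsmul_eq_mul, mul_comm _ (_ ^ _)]
  apply ψ.apply_eq_of_norm_sub_le_one hψ
  have hps : (0 : ℝ) < (p : ℝ) ^ (s : ℤ) :=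
    zpow_pos (by exact_mod_cast (Fact.out : p.Prime).pos) _
  rw [← mul_sub, norm_mul, Padic.norm_p_zpow, neg_neg, ← le_div_iff₀' hps, one_div, ← zpow_neg]
  exact_mod_cast PadicInt.norm_sub_appr_le t s

lemma AddChar.apply_p_inv_ne_one (hψ : ∀ x : ℚ_[p], ‖x‖ ≤ 1 → ψ x = 1)
    (hψ' : ∃ x : ℚ_[p], ‖x‖ ≤ p ∧ ψ x ≠ 1) : ψ ((p : ℚ_[p]) ^ (-1 : ℤ)) ≠ 1 := by
  obtain ⟨x, hx, hψx⟩ := hψ'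
  intro h
  have hpx : ‖(p : ℚ_[p]) * x‖ ≤ 1 := by
    rw [norm_mul, Padic.norm_p, inv_mul_le_iff₀ (by exact_mod_cast (Fact.out : p.Prime).pos),
      mul_one]
    exact hx
  have hx_eq : (p : ℚ_[p]) ^ (-((1 : ℕ) : ℤ)) * ((⟨_, hpx⟩ : ℤ_[p]) : ℚ_[p]) = x := by
    have : (p : ℚ_[p]) ≠ 0 := by exact_mod_cast (Fact.out : p.Prime).ne_zero
    simp [this]
  have hψx_eq := ψ.apply_p_zpow_neg_mul hψ 1 ⟨_, hpx⟩
  rw [hx_eq, Nat.cast_one, h, one_pow] at hψx_eq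
  exact hψx hψx_eq

lemma AddChar.isPrimitiveRoot_apply_p_zpow_neg (hψ : ∀ x : ℚ_[p], ‖x‖ ≤ 1 → ψ x = 1)
    (hψ' : ∃ x : ℚ_[p], ‖x‖ ≤ p ∧ ψ x ≠ 1) (s : ℕ) :
    IsPrimitiveRoot (ψ ((p : ℚ_[p]) ^ (-(s : ℤ)))) (p ^ s) := by
  have hp : (p : ℚ_[p]) ≠ 0 := by exact_mod_cast (Fact.out : p.Prime).ne_zero
  have hpow : ∀ j : ℕ,
      ψ ((p : ℚ_[p]) ^ (-(s : ℤ))) ^ p ^ j = ψ ((p : ℚ_[p]) ^ ((j : ℤ) - s)) := by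
    intro j
    rw [← AddChar.map_nsmul_eq_pow, nsmul_eq_mul, Nat.cast_pow, ← zpow_natCast, ← zpow_add₀ hp,
      ← sub_eq_add_neg]
  cases s with
  | zero => simpa using hψ 1 (by simp)
  | succ s =>
    rw [IsPrimitiveRoot.iff_orderOf]
    refine orderOf_eq_prime_pow ?_ ?_
    · rw [hpow]
      simpa using ψ.apply_p_inv_ne_one hψ hψ'
    · rw [hpow, sub_self, zpow_zero]
      exact hψ 1 (by simp)

lemma AddChar.norm_sub_le_of_apply_p_zpow_neg_mul_eq (hψ : ∀ x : ℚ_[p], ‖x‖ ≤ 1 → ψ x = 1)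
    (hψ' : ∃ x : ℚ_[p], ‖x‖ ≤ p ∧ ψ x ≠ 1) {s : ℕ} {c c' : ℤ_[p]}
    (h : ψ ((p : ℚ_[p]) ^ (-(s : ℤ)) * c) = ψ ((p : ℚ_[p]) ^ (-(s : ℤ)) * c')) :
    ‖c - c'‖ ≤ (p : ℝ) ^ (-(s : ℤ)) := by
  rw [ψ.apply_p_zpow_neg_mul hψ, ψ.apply_p_zpow_neg_mul hψ] at h
  have happr : c.appr s = c'.appr s := (ψ.isPrimitiveRoot_apply_p_zpow_neg hψ hψ' s).pow_inj
    (PadicInt.appr_lt c s) (PadicInt.appr_lt c' s) h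
  have hsplit : c - c' = (c - c.appr s) + -(c' - c'.appr s) := by rw [happr]; ring
  rw [hsplit]
  exact IsUltrametricDist.norm_add_le_of_le (PadicInt.norm_sub_appr_le c s)
    (by rw [norm_neg]; exact PadicInt.norm_sub_appr_le c' s)

end AdditiveCharacter

section AdditiveParameter

variable {p : ℕ} [Fact p.Prime]

lemma Padic.norm_two_eq_one (hp2 : p ≠ 2) : ‖(2 : ℚ_[p])‖ = 1 := by
  exact_mod_cast Padic.norm_natCast_eq_one_iff.mpr
    ((Nat.coprime_primes Fact.out Nat.prime_two).mpr hp2)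

lemma zpow_neg_pow_three_le {a : ℝ} (ha : 1 ≤ a) {m n : ℕ} (hn : n ≤ 3 * m) :
    (a ^ (-(m : ℤ))) ^ 3 ≤ a ^ (-(n : ℤ)) := by
  rw [← zpow_natCast, ← zpow_mul]
  exact zpow_le_zpow_right₀ ha (by omega)

lemma Padic.exists_unit_norm_truncLog_sub_p_pow_le (hp2 : p ≠ 2) {m n : ℕ} (hm : 1 ≤ m)
    (hn : n ≤ 3 * m) :
    ∃ v : ℚ_[p]ˣ, ‖(v : ℚ_[p]) - 1‖ ≤ (p : ℝ) ^ (-(m : ℤ)) ∧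
      ‖truncLog ((v : ℚ_[p]) - 1) - (p : ℚ_[p]) ^ m‖ ≤ (p : ℝ) ^ (-(n : ℤ)) := by
  have hp1 : (1 : ℝ) < p := by exact_mod_cast (Fact.out : p.Prime).one_lt
  have hq : ‖(p : ℚ_[p]) ^ m‖ = (p : ℝ) ^ (-(m : ℤ)) := Padic.norm_p_pow m
  obtain ⟨v, hv, hLv⟩ := exists_unit_norm_truncLog_sub_le (Padic.norm_two_eq_one hp2)
    (hq.trans_lt (zpow_lt_one_of_neg₀ hp1 (by omega)))
  rw [hq] at hv hLv
  exact ⟨v, hv, hLv.trans (zpow_neg_pow_three_le hp1.le hn)⟩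

variable {ψ : AddChar ℚ_[p] ℂ} {χ : ℚ_[p]ˣ →* ℂˣ} {m n : ℕ} {v₀ : ℚ_[p]ˣ}

lemma exists_map_eq_apply_p_zpow_neg_pow (hp2 : p ≠ 2)
    (hψ : ∀ x : ℚ_[p], ‖x‖ ≤ 1 → ψ x = 1) (hψ' : ∃ x : ℚ_[p], ‖x‖ ≤ p ∧ ψ x ≠ 1)
    (hm : 1 ≤ m) (hmn : m ≤ n) (hn : n ≤ 3 * m)
    (hχ : ∀ u : ℚ_[p]ˣ, ‖(u : ℚ_[p]) - 1‖ ≤ (p : ℝ) ^ (-(n : ℤ)) → χ u = 1)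
    (hv₀ : ‖(v₀ : ℚ_[p]) - 1‖ ≤ (p : ℝ) ^ (-(m : ℤ)))
    (hLv₀ : ‖truncLog ((v₀ : ℚ_[p]) - 1) - (p : ℚ_[p]) ^ m‖ ≤ (p : ℝ) ^ (-(n : ℤ))) :
    ∃ a : ℕ, (χ v₀ : ℂ) = ψ ((p : ℚ_[p]) ^ (-((n - m : ℕ) : ℤ))) ^ a := by
  have hp1 : (1 : ℝ) < p := by exact_mod_cast (Fact.out : p.Prime).one_lt
  have hk : ‖truncLog (((1 : ℚ_[p]ˣ) : ℚ_[p]) - 1)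
      - ((p ^ (n - m) : ℕ) : ℚ_[p]) * (p : ℚ_[p]) ^ m‖ ≤ (p : ℝ) ^ (-(n : ℤ)) := by
    rw [Units.val_one, sub_self, show truncLog (0 : ℚ_[p]) = 0 by simp [truncLog], zero_sub,
      norm_neg, Nat.cast_pow, ← pow_add, Nat.sub_add_cancel hmn, Padic.norm_p_pow]
  have hroot : χ v₀ ^ p ^ (n - m) = 1 := by
    rw [← map_eq_pow_of_norm_truncLog_sub_le (Padic.norm_two_eq_one hp2) χ hχ
      (zpow_lt_one_of_neg₀ hp1 (by omega)) (zpow_neg_pow_three_le hp1.le hn) hv₀ hLv₀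
      (v := 1) (by rw [Units.val_one, sub_self, norm_zero]; positivity) hk, map_one]
  have : NeZero (p ^ (n - m)) := ⟨pow_ne_zero _ (Fact.out : p.Prime).ne_zero⟩
  obtain ⟨a, -, ha⟩ :=
    (ψ.isPrimitiveRoot_apply_p_zpow_neg hψ hψ' (n - m)).eq_pow_of_pow_eq_one
      (by rw [← Units.val_pow_eq_pow_val, hroot, Units.val_one])
  exact ⟨a, ha.symm⟩

lemma map_eq_apply_p_zpow_neg_mul_truncLog (hp2 : p ≠ 2)
    (hψ : ∀ x : ℚ_[p], ‖x‖ ≤ 1 → ψ x = 1) (hm : 1 ≤ m) (hmn : m ≤ n) (hn : n ≤ 3 * m)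
    (hχ : ∀ u : ℚ_[p]ˣ, ‖(u : ℚ_[p]) - 1‖ ≤ (p : ℝ) ^ (-(n : ℤ)) → χ u = 1)
    (hv₀ : ‖(v₀ : ℚ_[p]) - 1‖ ≤ (p : ℝ) ^ (-(m : ℤ)))
    (hLv₀ : ‖truncLog ((v₀ : ℚ_[p]) - 1) - (p : ℚ_[p]) ^ m‖ ≤ (p : ℝ) ^ (-(n : ℤ))) {a : ℕ}
    (ha : (χ v₀ : ℂ) = ψ ((p : ℚ_[p]) ^ (-((n - m : ℕ) : ℤ))) ^ a) {v : ℚ_[p]ˣ}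
    (hv : ‖(v : ℚ_[p]) - 1‖ ≤ (p : ℝ) ^ (-(m : ℤ))) :
    (χ v : ℂ) = ψ ((p : ℚ_[p]) ^ (-(n : ℤ)) * a * truncLog ((v : ℚ_[p]) - 1)) := by
  have hp1 : (1 : ℝ) < p := by exact_mod_cast (Fact.out : p.Prime).one_lt
  have hp0 : (p : ℚ_[p]) ≠ 0 := by exact_mod_cast (Fact.out : p.Prime).ne_zero
  have h2 := Padic.norm_two_eq_one hp2
  have hr : (p : ℝ) ^ (-(m : ℤ)) < 1 := zpow_lt_one_of_neg₀ hp1 (by omega)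
  obtain ⟨t, ht⟩ :=
    Padic.exists_eq_p_pow_mul ((norm_truncLog_le h2 (hv.trans_lt hr)).trans hv)
  set s := n - m
  have hk :
      ‖truncLog ((v : ℚ_[p]) - 1) - t.appr s * (p : ℚ_[p]) ^ m‖ ≤ (p : ℝ) ^ (-(n : ℤ)) := by
    rw [ht, mul_comm _ ((p : ℚ_[p]) ^ m), ← mul_sub, norm_mul, Padic.norm_p_pow]
    calc (p : ℝ) ^ (-(m : ℤ)) * ‖(t : ℚ_[p]) - (t.appr s : ℚ_[p])‖
        ≤ (p : ℝ) ^ (-(m : ℤ)) * (p : ℝ) ^ (-(s : ℤ)) := by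
          gcongr
          exact_mod_cast PadicInt.norm_sub_appr_le t s
      _ = (p : ℝ) ^ (-(n : ℤ)) := by
          rw [← zpow_add₀ (zero_lt_one.trans hp1).ne']; congr 1; omega
  have hχv := map_eq_pow_of_norm_truncLog_sub_le h2 χ hχ hr (zpow_neg_pow_three_le hp1.le hn)
    hv₀ hLv₀ hv hk
  have hscale : (p : ℚ_[p]) ^ (-(n : ℤ)) * a * ((p : ℚ_[p]) ^ m * t)
      = a • ((p : ℚ_[p]) ^ (-(s : ℤ)) * t) := by
    rw [nsmul_eq_mul, show (s : ℤ) = n - m by omega, neg_sub, zpow_sub₀ hp0, zpow_natCast,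
      zpow_neg, zpow_natCast]
    field_simp
  rw [hχv, Units.val_pow_eq_pow_val, ha, ht, hscale, AddChar.map_nsmul_eq_pow,
    ψ.apply_p_zpow_neg_mul hψ, ← pow_mul, ← pow_mul, mul_comm]

lemma AddChar.norm_sub_le_of_apply_p_zpow_neg_mul_mul_eq
    (hψ : ∀ x : ℚ_[p], ‖x‖ ≤ 1 → ψ x = 1) (hψ' : ∃ x : ℚ_[p], ‖x‖ ≤ p ∧ ψ x ≠ 1) (hmn : m ≤ n)
    {y : ℚ_[p]} (hy : ‖y - (p : ℚ_[p]) ^ m‖ ≤ (p : ℝ) ^ (-(n : ℤ))) {c c' : ℤ_[p]}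
    (h : ψ ((p : ℚ_[p]) ^ (-(n : ℤ)) * c * y) = ψ ((p : ℚ_[p]) ^ (-(n : ℤ)) * c' * y)) :
    ‖(c : ℚ_[p]) - c'‖ ≤ (p : ℝ) ^ (-((n : ℤ) - m)) := by
  have hp0 : (p : ℚ_[p]) ≠ 0 := by exact_mod_cast (Fact.out : p.Prime).ne_zero
  have hp0' : (p : ℝ) ≠ 0 := by exact_mod_cast (Fact.out : p.Prime).ne_zero
  set s := n - m
  have hps : (p : ℚ_[p]) ^ (-(s : ℤ)) = (p : ℚ_[p]) ^ (-(n : ℤ)) * (p : ℚ_[p]) ^ m := by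
    rw [← zpow_natCast, ← zpow_add₀ hp0]; congr 1; omega
  have hshift : ∀ c : ℤ_[p], ψ ((p : ℚ_[p]) ^ (-(n : ℤ)) * c * y)
      = ψ ((p : ℚ_[p]) ^ (-(s : ℤ)) * c) := by
    intro c
    apply ψ.apply_eq_of_norm_sub_le_one hψ
    rw [hps, show ∀ x z w : ℚ_[p], x * c * z - x * w * c = x * c * (z - w) by intros; ring,
      norm_mul, norm_mul, Padic.norm_p_zpow, neg_neg]
    calc (p : ℝ) ^ (n : ℤ) * ‖(c : ℚ_[p])‖ * ‖y - (p : ℚ_[p]) ^ m‖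
        ≤ (p : ℝ) ^ (n : ℤ) * 1 * (p : ℝ) ^ (-(n : ℤ)) := by
          gcongr
          exact c.norm_le_one
      _ = 1 := by rw [mul_one, ← zpow_add₀ hp0', add_neg_cancel, zpow_zero]
  rw [hshift, hshift] at h
  rw [show (n : ℤ) - m = s by omega, ← PadicInt.coe_sub, ← PadicInt.norm_def]
  exact ψ.norm_sub_le_of_apply_p_zpow_neg_mul_eq hψ hψ' h

end AdditiveParameter

/-- Additive parameter of a multiplicative character (split case): if `ψ` is an
additive character of `ℚ_p` (`p` odd) of conductor exponent `0` and `χ` is a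
character of `ℚ_p^×` trivial on `1 + pⁿℤ_p` (`n ≥ 2`, `m = ⌊n/2⌋`), then there
is `c ∈ ℤ_p`, unique modulo `p^{n−m}ℤ_p`, with
`χ(1+u) = ψ(p^{−n}·c·(u − u²/2))` for all `u ∈ pᵐℤ_p`. -/
theorem padic_char_additive_parameter
    (p : ℕ) [Fact p.Prime] (hp2 : p ≠ 2)
    (ψ : AddChar ℚ_[p] ℂ)
    (hψ1 : ∀ x : ℚ_[p], ‖x‖ ≤ 1 → ψ x = 1)
    (hψ2 : ∃ x : ℚ_[p], ‖x‖ ≤ (p : ℝ) ∧ ψ x ≠ 1)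
    (n : ℕ) (hn : 2 ≤ n)
    (χ : ℚ_[p]ˣ →* ℂˣ)
    (hχ : ∀ u : ℚ_[p]ˣ, ‖(u : ℚ_[p]) - 1‖ ≤ (p : ℝ) ^ (-(n : ℤ)) → χ u = 1) :
    (∃ c : ℤ_[p], ∀ v : ℚ_[p]ˣ,
        ‖(v : ℚ_[p]) - 1‖ ≤ (p : ℝ) ^ (-((n / 2 : ℕ) : ℤ)) →
        (χ v : ℂ) = ψ ((p : ℚ_[p]) ^ (-(n : ℤ)) * (c : ℚ_[p]) *
          (((v : ℚ_[p]) - 1) - ((v : ℚ_[p]) - 1) ^ 2 / 2))) ∧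
    (∀ c c' : ℤ_[p],
        (∀ v : ℚ_[p]ˣ,
          ‖(v : ℚ_[p]) - 1‖ ≤ (p : ℝ) ^ (-((n / 2 : ℕ) : ℤ)) →
          (χ v : ℂ) = ψ ((p : ℚ_[p]) ^ (-(n : ℤ)) * (c : ℚ_[p]) *
            (((v : ℚ_[p]) - 1) - ((v : ℚ_[p]) - 1) ^ 2 / 2))) →
        (∀ v : ℚ_[p]ˣ,
          ‖(v : ℚ_[p]) - 1‖ ≤ (p : ℝ) ^ (-((n / 2 : ℕ) : ℤ)) →
          (χ v : ℂ) = ψ ((p : ℚ_[p]) ^ (-(n : ℤ)) * (c' : ℚ_[p]) *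
            (((v : ℚ_[p]) - 1) - ((v : ℚ_[p]) - 1) ^ 2 / 2))) →
        ‖(c : ℚ_[p]) - (c' : ℚ_[p])‖ ≤ (p : ℝ) ^ (-((n : ℤ) - (n / 2 : ℕ)))) := by
  set m := n / 2
  have hm : 1 ≤ m := by omega
  have hmn : m ≤ n := Nat.div_le_self n 2
  have h3m : n ≤ 3 * m := by omega
  obtain ⟨v₀, hv₀, hLv₀⟩ := Padic.exists_unit_norm_truncLog_sub_p_pow_le hp2 hm h3m
  obtain ⟨a, ha⟩ := exists_map_eq_apply_p_zpow_neg_pow hp2 hψ1 hψ2 hm hmn h3m hχ hv₀ hLv₀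
  refine ⟨⟨a, fun v hv => ?_⟩, fun c c' hc hc' => ?_⟩
  · rw [PadicInt.coe_natCast]
    exact map_eq_apply_p_zpow_neg_mul_truncLog hp2 hψ1 hm hmn h3m hχ hv₀ hLv₀ ha hv
  · exact ψ.norm_sub_le_of_apply_p_zpow_neg_mul_mul_eq hψ1 hψ2 hmn hLv₀
      ((hc v₀ hv₀).symm.trans (hc' v₀ hv₀))
end
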